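/- arXiv:1808.02253 — 6 statements merged into one kernel-verified Lean document; each statement's English description precedes it below -/
import Mathlib

section
/- Let n be a nonempty finite type, 0 < α < 1, and A an n×n real matrix. Suppose x₀ ∈ ℝ^n is nonzero and for some T > 0 the trajectory satisfies E_α(T^α • A) · x₀ = 0. Then there exist an eigenvalue λ ∈ spectrum ℂ A_ℂ of the complexification A_ℂ of A and a ζ ∈ ℂ with E_α(ζ) = 0 such that λ = ζ / T^α (in particular arg(λ) = arg(ζ)). -/
/-- The Mittag-Leffler function `E_α(z) = ∑ z^k / Γ(αk+1)`. -/
noncomputable def mlE (α : ℝ) (z : ℂ) : ℂ :=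
  ∑' k : ℕ, ((Real.Gamma (α * k + 1) : ℂ))⁻¹ * z ^ k

/-- The Mittag-Leffler matrix function `E_α(A) = ∑ A^k / Γ(αk+1)` of a real matrix. -/
noncomputable def mlMatR (α : ℝ) {n : Type*} [Fintype n] [DecidableEq n]
    (A : Matrix n n ℝ) : Matrix n n ℝ :=
  ∑' k : ℕ, (Real.Gamma (α * k + 1))⁻¹ • A ^ k


/-! The series `E_α(X)` is a limit of polynomials in `X`, and polynomials in a matrix form a
finite-dimensional, hence closed, subspace; so `E_α(X) = p(X)` for some polynomial `p`. If
`E_α(X)` kills `x₀ ≠ 0` it is singular, and the spectral mapping theorem for polynomials gives an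
eigenvalue `μ` of `X = T^α A` with `p(μ) = 0`. Applying both `E_α(X)` and `p(X)` to an
eigenvector for `μ` shows `E_α(μ) = p(μ) = 0`, and `μ / T^α` is an eigenvalue of `A`.
Convergence of the series follows from the ratio test and Gautschi's inequality
`(x + α)^α Γ(x + 1) ≤ Γ(x + α + 1)`, a consequence of the log-convexity of `Γ`. -/

open Polynomial Filter

namespace Real

theorem rpow_mul_Gamma_add_one_le_Gamma_add {x a : ℝ} (hxa : 0 < x + a) (ha0 : 0 < a)
    (ha1 : a < 1) : (x + a) ^ a * Gamma (x + 1) ≤ Gamma (x + a + 1) := by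
  have hΓ : 0 < Gamma (x + a) := Gamma_pos_of_pos hxa
  have hrec : Gamma (x + a + 1) = (x + a) * Gamma (x + a) := Gamma_add_one hxa.ne'
  have hconv := Gamma_mul_add_mul_le_rpow_Gamma_mul_rpow_Gamma hxa (by linarith : 0 < x + a + 1)
    ha0 (sub_pos.2 ha1) (add_sub_cancel a 1)
  rw [show a * (x + a) + (1 - a) * (x + a + 1) = x + 1 by ring, hrec,
    mul_rpow hxa.le hΓ.le] at hconv
  calc (x + a) ^ a * Gamma (x + 1)
      ≤ (x + a) ^ a * (Gamma (x + a) ^ a * ((x + a) ^ (1 - a) * Gamma (x + a) ^ (1 - a))) := by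
        gcongr
    _ = (x + a) ^ (a + (1 - a)) * Gamma (x + a) ^ (a + (1 - a)) := by
        rw [rpow_add hxa, rpow_add hΓ]; ring
    _ = Gamma (x + a + 1) := by rw [add_sub_cancel, rpow_one, rpow_one, hrec]

theorem summable_inv_Gamma_mul_pow {α : ℝ} (hα0 : 0 < α) (hα1 : α < 1) (r : ℝ) :
    Summable fun k : ℕ => (Gamma (α * k + 1))⁻¹ * r ^ k := by
  refine summable_of_ratio_norm_eventually_le one_half_lt_one ?_
  have hgrow : Tendsto (fun k : ℕ => (α * k + α) ^ α) atTop atTop :=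
    (tendsto_rpow_atTop hα0).comp <| tendsto_atTop_add_const_right _ _ <|
      tendsto_natCast_atTop_atTop.const_mul_atTop hα0
  filter_upwards [hgrow.eventually_ge_atTop (2 * |r|)] with k hk
  have hΓ : 0 < Gamma (α * k + 1) := Gamma_pos_of_pos (by positivity)
  have hstep : 2 * |r| * Gamma (α * k + 1) ≤ Gamma (α * ↑(k + 1) + 1) :=
    calc 2 * |r| * Gamma (α * k + 1) ≤ (α * k + α) ^ α * Gamma (α * k + 1) := by gcongr
      _ ≤ Gamma (α * k + α + 1) :=
        rpow_mul_Gamma_add_one_le_Gamma_add (by positivity) hα0 hα1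
      _ = Gamma (α * ↑(k + 1) + 1) := by push_cast; ring_nf
  have hΓ' : 0 < Gamma (α * ↑(k + 1) + 1) := Gamma_pos_of_pos (by positivity)
  simp only [norm_mul, norm_inv, norm_pow, norm_of_nonneg hΓ.le, norm_of_nonneg hΓ'.le,
    norm_eq_abs]
  rw [inv_mul_le_iff₀ hΓ', pow_succ]
  calc |r| ^ k * |r|
      = 2 * |r| * Gamma (α * k + 1) * (1 / 2 * ((Gamma (α * k + 1))⁻¹ * |r| ^ k)) := by
        field_simp
    _ ≤ _ := by gcongr

end Real

section

variable {α : ℝ}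

theorem summable_inv_Gamma_smul_pow {𝔸 : Type*} [NormedRing 𝔸] [NormedSpace ℝ 𝔸]
    [CompleteSpace 𝔸] (hα0 : 0 < α) (hα1 : α < 1) (x : 𝔸) :
    Summable fun k : ℕ => (Real.Gamma (α * k + 1))⁻¹ • x ^ k := by
  refine (summable_nat_add_iff 1).1 <| Summable.of_norm_bounded
    ((summable_nat_add_iff 1).2 (Real.summable_inv_Gamma_mul_pow hα0 hα1 ‖x‖)) fun k => ?_
  have hΓ : 0 < Real.Gamma (α * ↑(k + 1) + 1) := Real.Gamma_pos_of_pos (by positivity)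
  rw [norm_smul, Real.norm_of_nonneg (inv_nonneg.2 hΓ.le)]
  gcongr
  exact norm_pow_le' x k.succ_pos

theorem Matrix.summable_inv_Gamma_smul_pow {n 𝕜 : Type*} [Fintype n] [DecidableEq n]
    [RCLike 𝕜] (hα0 : 0 < α) (hα1 : α < 1) (X : Matrix n n 𝕜) :
    Summable fun k : ℕ => (Real.Gamma (α * k + 1))⁻¹ • X ^ k :=
  open scoped Matrix.Norms.Operator in _root_.summable_inv_Gamma_smul_pow hα0 hα1 X

end

theorem exists_aeval_eq_of_hasSum {𝕜 A : Type*} [NontriviallyNormedField 𝕜] [CompleteSpace 𝕜]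
    [Ring A] [Algebra 𝕜 A] [TopologicalSpace A] [IsTopologicalAddGroup A] [ContinuousSMul 𝕜 A]
    [T2Space A] [FiniteDimensional 𝕜 A] {a S : A} {c : ℕ → 𝕜}
    (hS : HasSum (fun k => c k • a ^ k) S) : ∃ p : 𝕜[X], aeval a p = S := by
  have hclosed : IsClosed ((Algebra.adjoin 𝕜 {a}).toSubmodule : Set A) :=
    Submodule.closed_of_finiteDimensional _
  have hmem : S ∈ Algebra.adjoin 𝕜 {a} :=
    hclosed.mem_of_tendsto hS <| Eventually.of_forall fun s => Subalgebra.sum_mem _ fun k _ =>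
      Subalgebra.smul_mem _ (Subalgebra.pow_mem _ (Algebra.self_mem_adjoin_singleton 𝕜 a) k) _
  rwa [Algebra.adjoin_singleton_eq_range_aeval] at hmem

open Matrix in
theorem Matrix.exists_mem_spectrum_hasSum_eq_zero {n 𝕜 : Type*} [Fintype n] [DecidableEq n]
    [NontriviallyNormedField 𝕜] [CompleteSpace 𝕜] [IsAlgClosed 𝕜] {M S : Matrix n n 𝕜}
    {c : ℕ → 𝕜} (hS : HasSum (fun k => c k • M ^ k) S) (hdet : S.det = 0) :
    ∃ μ ∈ spectrum 𝕜 M, HasSum (fun k => c k * μ ^ k) 0 := by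
  have : Nonempty n := not_isEmpty_iff.1 fun _ => by simp at hdet
  obtain ⟨p, hp⟩ := exists_aeval_eq_of_hasSum hS
  have h0 : (0 : 𝕜) ∈ spectrum 𝕜 (aeval M p) := by
    rw [spectrum.zero_mem_iff, isUnit_iff_isUnit_det, hp, hdet]
    exact not_isUnit_zero
  rw [spectrum.map_polynomial_aeval_of_nonempty _ _
    (spectrum.nonempty_of_isAlgClosed_of_finiteDimensional 𝕜 M)] at h0
  obtain ⟨μ, hμ, hpμ⟩ := h0
  obtain ⟨v, hv⟩ := (Module.End.hasEigenvalue_iff_mem_spectrum.2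
    ((spectrum_toLin' M).symm ▸ hμ)).exists_hasEigenvector
  have hSv : S *ᵥ v = 0 := by
    have h := Module.End.aeval_apply_of_hasEigenvector (p := p) hv
    rw [show toLin' M = toLinAlgEquiv' M from rfl, aeval_algHom_apply, toLinAlgEquiv'_apply,
      hp] at h
    rw [h, show eval μ p = 0 from hpμ, zero_smul]
  have hterm : ∀ k, (c k • M ^ k) *ᵥ v = (c k * μ ^ k) • v := by
    intro k
    have h := hv.pow_apply k
    rw [show toLin' M = toLinAlgEquiv' M from rfl, ← map_pow, toLinAlgEquiv'_apply] at h
    rw [smul_mulVec, h, smul_smul]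
  obtain ⟨i, hi⟩ : ∃ i, v i ≠ 0 := Function.ne_iff.1 hv.2
  refine ⟨μ, hμ, (hasSum_mul_right_iff hi).1 ?_⟩
  have hcoord := Pi.hasSum.1 (hS.map (mulVec.addMonoidHomLeft v)
    (continuous_id.matrix_mulVec continuous_const)) i
  simpa [mulVec.addMonoidHomLeft, hterm, hSv] using hcoord

theorem Matrix.hasSum_mlMatR_map_ofReal {α : ℝ} {n : Type*} [Fintype n] [DecidableEq n]
    (hα0 : 0 < α) (hα1 : α < 1) (X : Matrix n n ℝ) :
    HasSum (fun k : ℕ => ((Real.Gamma (α * k + 1) : ℂ))⁻¹ • (X.map Complex.ofReal) ^ k)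
      ((mlMatR α X).map Complex.ofReal) := by
  have h := (Matrix.summable_inv_Gamma_smul_pow hα0 hα1 X).hasSum.map
    (Algebra.ofId ℝ ℂ).mapMatrix (continuous_id.matrix_map Complex.continuous_ofReal)
  simp only [Function.comp_def, map_smul, map_pow, AlgHom.mapMatrix_apply, ← Complex.coe_smul,
    Complex.ofReal_inv] at h
  exact h

theorem trajectory_hits_origin_necessary_general {n : Type*} [Fintype n] [DecidableEq n]
    (α : ℝ) (hα0 : 0 < α) (hα1 : α < 1) (A : Matrix n n ℝ)
    (x₀ : n → ℝ) (hx₀ : x₀ ≠ 0) (T : ℝ) (hT : 0 < T)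
    (hzero : (mlMatR α ((T ^ α) • A)).mulVec x₀ = 0) :
    ∃ lam ∈ spectrum ℂ (A.map Complex.ofReal), ∃ ζ : ℂ, mlE α ζ = 0 ∧
      lam = ζ / ((T ^ α : ℝ) : ℂ) := by
  have hdet : (mlMatR α (T ^ α • A)).det = 0 := by
    by_contra h
    exact hx₀ (Matrix.eq_zero_of_mulVec_eq_zero h hzero)
  obtain ⟨μ, hμ, hsum⟩ := Matrix.exists_mem_spectrum_hasSum_eq_zero
    (Matrix.hasSum_mlMatR_map_ofReal hα0 hα1 (T ^ α • A))
    ((Complex.ofRealHom.map_det _).symm.trans (by rw [hdet, map_zero]))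
  have hTα : ((T ^ α : ℝ) : ℂ) ≠ 0 := by exact_mod_cast (Real.rpow_pos_of_pos hT α).ne'
  have hscale : (T ^ α • A).map Complex.ofReal = Units.mk0 _ hTα • A.map Complex.ofReal := by
    ext; simp
  rw [hscale, spectrum.unit_smul_eq_smul] at hμ
  obtain ⟨lam, hlam, rfl⟩ := hμ
  refine ⟨lam, hlam, _, hsum.tsum_eq, ?_⟩
  dsimp only
  rw [Units.val_mk0, smul_eq_mul, mul_div_cancel_left₀ _ hTα]

theorem trajectory_hits_origin_necessary {n : Type*} [Fintype n] [DecidableEq n] [Nonempty n]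
    (α : ℝ) (hα0 : 0 < α) (hα1 : α < 1) (A : Matrix n n ℝ)
    (x₀ : n → ℝ) (hx₀ : x₀ ≠ 0) (T : ℝ) (hT : 0 < T)
    (hzero : (mlMatR α ((T ^ α) • A)).mulVec x₀ = 0) :
    ∃ lam ∈ spectrum ℂ (A.map Complex.ofReal), ∃ ζ : ℂ, mlE α ζ = 0 ∧
      lam = ζ / ((T ^ α : ℝ) : ℂ) :=
  trajectory_hits_origin_necessary_general α hα0 hα1 A x₀ hx₀ T hT hzero
end

section
/- Let n be a nonempty finite type, 0 < α < 1, and A an n×n real matrix with complexification A_ℂ. If there exist an eigenvalue λ ∈ spectrum ℂ A_ℂ and a ζ ∈ ℂ with E_α(ζ) = 0 such that arg(λ) = arg(ζ), then there exists T > 0 such that the kernel of E_α(T^α • A) is nontrivial; i.e., there exists x₀ ∈ ℝ^n with x₀ ≠ 0 and E_α(T^α • A) · x₀ = 0 (so the trajectory u(t; x₀) hits the origin at time T). -/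
/-!
If `A_ℂ v = λ v`, a power series in `A` acts on `v` as the same series in `λ`, so
`E_α(t^α A) v = E_α(t^α λ) v`. Both series converge everywhere: convexity of `log Γ` gives
`Γ(αk + 1) / Γ(αk + α + 1) ≤ (αk)^(-α) → 0`, so the ratio test applies. As `E_α ≥ 1` on
`[0, ∞)`, the zero `ζ` lies off that ray, so `λ` and `ζ` are nonzero with the same argument,
i.e. `ζ = s λ` with `s > 0`. At `T = s^(1/α)` the vector `v` is a complex kernel vector of the real
matrix `E_α(T^α A)`, whose determinant therefore vanishes.
-/

open Filter Topology Matrix FormalMultilinearSeries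

namespace Real

theorem rpow_mul_Gamma_add_one_le_Gamma_add_s7 {y α : ℝ} (hy : 0 < y) (hα : 0 < α) :
    y ^ α * Gamma (y + 1) ≤ Gamma (y + 1 + α) := by
  have hΓy := Gamma_pos_of_pos hy
  have hΓy1 := Gamma_pos_of_pos (by linarith : 0 < y + 1)
  have hslope := convexOn_log_Gamma.slope_mono_adjacent (x := y) (y := y + 1) (z := y + 1 + α)
    hy (by simp only [Set.mem_Ioi]; linarith) (by linarith) (by linarith)
  have hstep : log (Gamma (y + 1)) - log (Gamma y) = log y := by
    rw [Gamma_add_one hy.ne', log_mul hy.ne' hΓy.ne']; ring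
  simp only [Function.comp_apply, add_sub_cancel_left, div_one, hstep] at hslope
  rw [le_div_iff₀ hα] at hslope
  rw [← log_le_log_iff (by positivity) (Gamma_pos_of_pos (by linarith)),
    log_mul (by positivity) hΓy1.ne', log_rpow hy]
  linarith

end Real

noncomputable def mittagLefflerCoeff (α : ℝ) (k : ℕ) : ℝ := (Real.Gamma (α * k + 1))⁻¹

theorem mittagLefflerCoeff_pos {α : ℝ} (hα : 0 ≤ α) (k : ℕ) : 0 < mittagLefflerCoeff α k :=
  inv_pos.mpr (Real.Gamma_pos_of_pos (by positivity))

theorem tendsto_mittagLefflerCoeff_succ_div {α : ℝ} (hα : 0 < α) :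
    Tendsto (fun k ↦ ‖mittagLefflerCoeff α k.succ‖ / ‖mittagLefflerCoeff α k‖) atTop (𝓝 0) := by
  have hbound : Tendsto (fun k : ℕ ↦ (α * k) ^ (-α)) atTop (𝓝 0) :=
    (tendsto_rpow_neg_atTop hα).comp (tendsto_natCast_atTop_atTop.const_mul_atTop hα)
  refine tendsto_of_tendsto_of_tendsto_of_le_of_le' tendsto_const_nhds hbound
    (Eventually.of_forall fun k ↦ by positivity) ?_
  filter_upwards [eventually_ge_atTop 1] with k hk
  have hy : 0 < α * k := by positivity
  rw [Real.norm_of_nonneg (mittagLefflerCoeff_pos hα.le _).le,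
    Real.norm_of_nonneg (mittagLefflerCoeff_pos hα.le _).le, mittagLefflerCoeff,
    mittagLefflerCoeff, inv_div_inv, Nat.succ_eq_add_one, Nat.cast_add_one,
    show α * (k + 1) + 1 = α * k + 1 + α by ring, Real.rpow_neg hy.le,
    div_le_iff₀ (Real.Gamma_pos_of_pos (by linarith)), ← div_eq_inv_mul,
    le_div_iff₀ (by positivity)]
  exact mul_comm (Real.Gamma _) _ ▸ Real.rpow_mul_Gamma_add_one_le_Gamma_add_s7 hy hα

theorem summable_mittagLefflerCoeff_smul_pow {E : Type*} [NormedRing E] [NormedAlgebra ℝ E]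
    [CompleteSpace E] {α : ℝ} (hα : 0 < α) (x : E) :
    Summable fun k ↦ mittagLefflerCoeff α k • x ^ k := by
  have hradius : (ofScalars E (mittagLefflerCoeff α)).radius = ⊤ :=
    ofScalars_radius_eq_top_of_tendsto E _
      (Eventually.of_forall fun k ↦ (mittagLefflerCoeff_pos hα.le k).ne')
      (tendsto_mittagLefflerCoeff_succ_div hα)
  have hx : x ∈ Metric.eball 0 (ofScalars E (mittagLefflerCoeff α)).radius := by
    rw [hradius, Metric.mem_eball]
    exact edist_lt_top x 0
  have hnorm := summable_norm_apply _ hx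
  simp only [ofScalars_apply_eq] at hnorm
  exact hnorm.of_norm

theorem hasSum_mlE {α : ℝ} (hα : 0 < α) (z : ℂ) :
    HasSum (fun k ↦ mittagLefflerCoeff α k • z ^ k) (mlE α z) := by
  have hterm (k : ℕ) :
      mittagLefflerCoeff α k • z ^ k = ((Real.Gamma (α * k + 1) : ℂ))⁻¹ * z ^ k := by
    rw [mittagLefflerCoeff, Complex.real_smul, Complex.ofReal_inv]
  have hsummable := summable_mittagLefflerCoeff_smul_pow hα z
  simp only [hterm] at hsummable ⊢
  exact hsummable.hasSum

theorem mlE_ofReal_ne_zero {α : ℝ} (hα : 0 < α) {r : ℝ} (hr : 0 ≤ r) : mlE α r ≠ 0 := by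
  obtain ⟨S, hS⟩ := summable_mittagLefflerCoeff_smul_pow hα r
  have hcast (k : ℕ) : ((mittagLefflerCoeff α k • r ^ k : ℝ) : ℂ) =
      mittagLefflerCoeff α k • (r : ℂ) ^ k := by
    simp [Complex.real_smul]
  have hmlE : mlE α r = S :=
    (hasSum_mlE hα r).unique (by simpa only [hcast] using Complex.hasSum_ofReal.mpr hS)
  have hS1 : 1 ≤ S := by
    simpa [mittagLefflerCoeff] using
      le_hasSum hS 0 fun k _ ↦ smul_nonneg (mittagLefflerCoeff_pos hα.le k).le (pow_nonneg hr k)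
  rw [hmlE]
  exact_mod_cast (by linarith : S ≠ 0)

theorem arg_ne_zero_of_mlE_eq_zero {α : ℝ} (hα : 0 < α) {ζ : ℂ} (hζ : mlE α ζ = 0) :
    ζ.arg ≠ 0 := by
  intro harg
  obtain ⟨hre, him⟩ := Complex.arg_eq_zero_iff.mp harg
  have hζ_real : ζ = (ζ.re : ℂ) := Complex.ext rfl (by simp [him])
  exact mlE_ofReal_ne_zero hα hre (hζ_real ▸ hζ)

section

variable {n : Type*} [Fintype n] [DecidableEq n]

theorem hasSum_mlMatR {α : ℝ} (hα : 0 < α) (M : Matrix n n ℝ) :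
    HasSum (fun k ↦ mittagLefflerCoeff α k • M ^ k) (mlMatR α M) := by
  -- any of Mathlib's matrix norms induces the product topology in which `mlMatR` is summed
  let := Matrix.linftyOpNormedRing (n := n) (α := ℝ)
  let := Matrix.linftyOpNormedAlgebra (n := n) (R := ℝ) (α := ℝ)
  exact (summable_mittagLefflerCoeff_smul_pow hα M).hasSum

theorem mlMatR_smul_map_ofReal_mulVec {α : ℝ} (hα : 0 < α) (t : ℝ) {M : Matrix n n ℝ}
    {μ : ℂ} {v : n → ℂ}
    (hv : Module.End.HasEigenvector (toLin' (M.map Complex.ofReal)) μ v) :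
    (mlMatR α (t • M)).map Complex.ofReal *ᵥ v = mlE α (t * μ) • v := by
  let Φ : Matrix n n ℝ →L[ℝ] n → ℂ := LinearMap.toContinuousLinearMap
    { toFun N := N.map Complex.ofReal *ᵥ v
      map_add' N N' := by rw [Matrix.map_add _ Complex.ofReal_add, Matrix.add_mulVec]
      map_smul' c N := by
        ext i
        simp [Matrix.mulVec, dotProduct, Finset.mul_sum, mul_assoc, Complex.real_smul] }
  have hpow (k : ℕ) : (M ^ k).map Complex.ofReal *ᵥ v = μ ^ k • v := by
    rw [show (M ^ k).map Complex.ofReal = (M.map Complex.ofReal) ^ k from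
      Matrix.map_pow M Complex.ofRealHom k, ← toLin'_apply, toLin'_pow]
    exact hv.pow_apply k
  have hterm (k : ℕ) : Φ (mittagLefflerCoeff α k • (t • M) ^ k) =
      (mittagLefflerCoeff α k • (t * μ) ^ k) • v := by
    have hmap (a : ℝ) (N : Matrix n n ℝ) :
        (a • N).map Complex.ofReal = (a : ℂ) • N.map Complex.ofReal := by
      ext; simp
    simp only [Φ, LinearMap.coe_toContinuousLinearMap', LinearMap.coe_mk, AddHom.coe_mk]
    rw [smul_pow, smul_smul, hmap, Matrix.smul_mulVec, hpow, smul_smul, Complex.real_smul,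
      mul_pow]
    congr 1
    push_cast
    ring
  exact (hasSum_mlMatR hα (t • M)).mapL Φ |>.unique <| by
    simpa only [Function.comp_def, hterm] using (hasSum_mlE hα (t * μ)).smul_const v

theorem Matrix.exists_mulVec_eq_zero_of_map_ofReal {M : Matrix n n ℝ} {v : n → ℂ}
    (hv0 : v ≠ 0) (hv : M.map Complex.ofReal *ᵥ v = 0) : ∃ x ≠ 0, M *ᵥ x = 0 := by
  refine Matrix.exists_mulVec_eq_zero_iff.mpr ?_
  have hdet : ((M.det : ℝ) : ℂ) = (M.map Complex.ofReal).det := Complex.ofRealHom.map_det M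
  exact_mod_cast hdet.trans (Matrix.exists_mulVec_eq_zero_iff.mp ⟨v, hv0, hv⟩)

end

theorem trajectory_hits_origin_sufficient_general {n : Type*} [Fintype n] [DecidableEq n]
    (α : ℝ) (hα0 : 0 < α) (A : Matrix n n ℝ)
    (h : ∃ lam ∈ spectrum ℂ (A.map Complex.ofReal), ∃ ζ : ℂ, mlE α ζ = 0 ∧
      lam.arg = ζ.arg) :
    ∃ T : ℝ, 0 < T ∧ ∃ x₀ : n → ℝ, x₀ ≠ 0 ∧ (mlMatR α ((T ^ α) • A)).mulVec x₀ = 0 := by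
  obtain ⟨lam, hlam, ζ, hζ, harg⟩ := h
  have hζ_arg := arg_ne_zero_of_mlE_eq_zero hα0 hζ
  have hζ0 : ζ ≠ 0 := by rintro rfl; exact hζ_arg Complex.arg_zero
  have hlam0 : lam ≠ 0 := by rintro rfl; exact hζ_arg (harg ▸ Complex.arg_zero)
  have hlam' : lam ∈ spectrum ℂ (toLin' (A.map Complex.ofReal)) := by
    rwa [Matrix.spectrum_toLin']
  obtain ⟨v, hv⟩ := (Module.End.hasEigenvalue_iff_mem_spectrum.mpr hlam').exists_hasEigenvector
  set s := ‖ζ‖ / ‖lam‖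
  have hs : 0 < s := by positivity
  have hζ_eq : (s : ℂ) * lam = ζ := by
    simpa [s] using (Complex.arg_eq_arg_iff hlam0 hζ0).mp harg
  refine ⟨s ^ α⁻¹, by positivity, ?_⟩
  rw [← Real.rpow_mul hs.le, inv_mul_cancel₀ hα0.ne', Real.rpow_one]
  refine Matrix.exists_mulVec_eq_zero_of_map_ofReal hv.2 ?_
  rw [mlMatR_smul_map_ofReal_mulVec hα0 s hv, hζ_eq, hζ, zero_smul]

theorem trajectory_hits_origin_sufficient {n : Type*} [Fintype n] [DecidableEq n] [Nonempty n]
    (α : ℝ) (hα0 : 0 < α) (hα1 : α < 1) (A : Matrix n n ℝ)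
    (h : ∃ lam ∈ spectrum ℂ (A.map Complex.ofReal), ∃ ζ : ℂ, mlE α ζ = 0 ∧
      lam.arg = ζ.arg) :
    ∃ T : ℝ, 0 < T ∧ ∃ x₀ : n → ℝ, x₀ ≠ 0 ∧ (mlMatR α ((T ^ α) • A)).mulVec x₀ = 0 :=
  trajectory_hits_origin_sufficient_general α hα0 A h
end

section
/- Let n be a nonempty finite type, 0 < α < 1, and A an n×n real matrix. Suppose x₀, y₀ ∈ ℝ^n with x₀ ≠ y₀ and for some T > 0 the trajectories intersect at the same time: E_α(T^α • A) · x₀ = E_α(T^α • A) · y₀. Then there exists an eigenvalue λ ∈ spectrum ℂ A_ℂ of the complexification A_ℂ of A with E_α(T^α λ) = 0 (equivalently, T^α λ is a zero of E_α, so arg(λ) equals the argument of a zero of E_α). -/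
open Filter
open scoped Nat Matrix

lemma summable_pow_div_factorial_div {N : ℕ} (hN : N ≠ 0) {x : ℝ} (hx : 0 ≤ x) :
    Summable fun k : ℕ => x ^ k / (k / N)! := by
  have : NeZero N := ⟨hN⟩
  have hprod : Summable fun p : ℕ × Fin N => (x ^ N) ^ p.1 / p.1 ! * x ^ (p.2 : ℕ) :=
    (Real.summable_pow_div_factorial (x ^ N)).mul_of_nonneg
      (Summable.of_finite : Summable fun j : Fin N => x ^ (j : ℕ))
      (fun q => by positivity) (fun j => by positivity)
  refine ((Nat.divModEquiv N).summable_iff.2 hprod).congr fun k => ?_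
  simp only [Function.comp_apply, Nat.divModEquiv_apply, Fin.val_ofNat]
  rw [← pow_mul, div_mul_eq_mul_div, ← pow_add, Nat.div_add_mod]

lemma factorial_div_le_Gamma {α : ℝ} {N k : ℕ} (hN : 1 ≤ α * N) (hk : N ≤ k) :
    ((k / N)! : ℝ) ≤ Real.Gamma (α * k + 1) := by
  have hN0 : 0 < N := Nat.pos_of_ne_zero fun h => by simp [h] at hN; linarith
  have hq : (1 : ℝ) ≤ (k / N : ℕ) := by exact_mod_cast (Nat.one_le_div_iff hN0).2 hk
  have hqk : ((k / N : ℕ) : ℝ) ≤ α * k :=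
    calc ((k / N : ℕ) : ℝ) ≤ k / N := Nat.cast_div_le
      _ ≤ α * k := by
        rw [div_le_iff₀ (by exact_mod_cast hN0)]
        nlinarith [(k.cast_nonneg : (0 : ℝ) ≤ k)]
  rw [← Real.Gamma_nat_eq_factorial]
  exact Real.Gamma_strictMonoOn_Ici.monotoneOn (by simp only [Set.mem_Ici]; linarith)
    (by simp only [Set.mem_Ici]; linarith) (by linarith)

lemma summable_inv_Gamma_mul_pow {α : ℝ} (hα : 0 < α) {r : ℝ} (hr : 0 ≤ r) :
    Summable fun k : ℕ => (Real.Gamma (α * k + 1))⁻¹ * r ^ k := by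
  set N := ⌈α⁻¹⌉₊
  have hN0 : N ≠ 0 := (Nat.ceil_pos.2 (inv_pos.2 hα)).ne'
  have hN : 1 ≤ α * N := by
    calc (1 : ℝ) = α * α⁻¹ := (mul_inv_cancel₀ hα.ne').symm
      _ ≤ α * N := by gcongr; exact Nat.le_ceil _
  refine .of_norm_bounded_eventually_nat (summable_pow_div_factorial_div hN0 hr) ?_
  filter_upwards [eventually_ge_atTop N] with k hk
  rw [Real.norm_of_nonneg (by positivity), div_eq_inv_mul]
  gcongr
  exact factorial_div_le_Gamma hN hk

noncomputable def mittagLeffler (α : ℝ) {𝔸 : Type*} [Semiring 𝔸] [Module ℝ 𝔸] [TopologicalSpace 𝔸]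
    (a : 𝔸) : 𝔸 :=
  ∑' k : ℕ, (Real.Gamma (α * k + 1))⁻¹ • a ^ k

lemma mlE_eq_mittagLeffler (α : ℝ) (z : ℂ) : mlE α z = mittagLeffler α z := by
  simp only [mlE, mittagLeffler, Complex.real_smul, Complex.ofReal_inv]

section Summable

variable {α : ℝ} {𝔸 : Type*} [NormedRing 𝔸] [NormedAlgebra ℝ 𝔸] [CompleteSpace 𝔸]

lemma summable_mittagLeffler (hα : 0 < α) (a : 𝔸) :
    Summable fun k : ℕ => (Real.Gamma (α * k + 1))⁻¹ • a ^ k := by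
  refine .of_norm_bounded_eventually_nat (summable_inv_Gamma_mul_pow hα (norm_nonneg a)) ?_
  filter_upwards [eventually_ge_atTop 1] with k hk
  rw [norm_smul, Real.norm_of_nonneg (by positivity)]
  gcongr
  exact norm_pow_le' a hk

lemma hasSum_mittagLeffler (hα : 0 < α) (a : 𝔸) :
    HasSum (fun k : ℕ => (Real.Gamma (α * k + 1))⁻¹ • a ^ k) (mittagLeffler α a) :=
  (summable_mittagLeffler hα a).hasSum

end Summable

lemma AlgHom.map_mittagLeffler {𝔸 𝔹 : Type*} [NormedRing 𝔸] [NormedAlgebra ℝ 𝔸]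
    [CompleteSpace 𝔸] [Semiring 𝔹] [Algebra ℝ 𝔹] [TopologicalSpace 𝔹] [T2Space 𝔹]
    {α : ℝ} (hα : 0 < α) (f : 𝔸 →ₐ[ℝ] 𝔹) (hf : Continuous f) (a : 𝔸) :
    f (mittagLeffler α a) = mittagLeffler α (f a) := by
  rw [mittagLeffler, (summable_mittagLeffler hα a).map_tsum f hf]
  simp only [map_smul, map_pow, mittagLeffler]

lemma Commute.mittagLeffler_right {𝔸 : Type*} [Semiring 𝔸] [Algebra ℝ 𝔸] [TopologicalSpace 𝔸]
    [IsTopologicalSemiring 𝔸] [T2Space 𝔸] {a b : 𝔸} (h : Commute b a) (α : ℝ) :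
    Commute b (mittagLeffler α a) :=
  Commute.tsum_right b fun k => (h.pow_right k).smul_right _

section

-- Any submultiplicative norm would do: it only serves to prove summability.
attribute [local instance] Matrix.linftyOpNormedRing Matrix.linftyOpNormedAlgebra

lemma Matrix.mittagLeffler_mulVec_of_mulVec_eq_smul {n 𝕜 : Type*} [Fintype n] [DecidableEq n]
    [RCLike 𝕜] {α : ℝ} (hα : 0 < α)
    {M : Matrix n n 𝕜} {μ : 𝕜} {w : n → 𝕜} (hw : M *ᵥ w = μ • w) :
    mittagLeffler α M *ᵥ w = mittagLeffler α μ • w := by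
  have hpow (k : ℕ) : (M ^ k) *ᵥ w = μ ^ k • w := by
    induction k with
    | zero => simp
    | succ k ih => rw [pow_succ', ← Matrix.mulVec_mulVec, ih, Matrix.mulVec_smul, hw, smul_smul,
        ← pow_succ]
  have hM : HasSum (fun k : ℕ => ((Real.Gamma (α * k + 1))⁻¹ • M ^ k) *ᵥ w)
      (mittagLeffler α M *ᵥ w) :=
    (hasSum_mittagLeffler hα M).map (Matrix.mulVec.addMonoidHomLeft w)
      (continuous_id.matrix_mulVec continuous_const)
  refine hM.unique ?_
  convert (hasSum_mittagLeffler hα μ).smul_const w using 2 with k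
  rw [Matrix.smul_mulVec, hpow, smul_assoc]

lemma Module.End.exists_hasEigenvector_mem_ker_of_commute {K V : Type*} [Field K] [IsAlgClosed K]
    [AddCommGroup V] [Module K V] [FiniteDimensional K V] {f g : Module.End K V}
    (hfg : Commute f g) (hg : LinearMap.ker g ≠ ⊥) :
    ∃ μ v, f.HasEigenvector μ v ∧ g v = 0 := by
  have hmaps : ∀ v ∈ LinearMap.ker g, f v ∈ LinearMap.ker g := fun v hv => by
    rw [LinearMap.mem_ker] at hv ⊢
    rw [← Module.End.mul_apply, ← hfg.eq, Module.End.mul_apply, hv, map_zero]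
  have : Nontrivial (LinearMap.ker g) := Submodule.nontrivial_iff_ne_bot.2 hg
  obtain ⟨μ, hμ⟩ := Module.End.exists_eigenvalue (f.restrict hmaps)
  obtain ⟨v, hv⟩ := hμ.exists_hasEigenvector
  refine ⟨μ, v, Module.End.hasEigenvector_iff.2 ⟨?_, ?_⟩, v.2⟩
  · simpa [LinearMap.restrict_apply, Subtype.ext_iff] using hv.apply_eq_smul
  · simpa using (Module.End.hasEigenvector_iff.1 hv).2

lemma Matrix.exists_mem_spectrum_mittagLeffler_mul_eq_zero {n : Type*} [Fintype n]
    [DecidableEq n] {α : ℝ} (hα : 0 < α) (c : ℂ) (M : Matrix n n ℂ) {v : n → ℂ} (hv : v ≠ 0)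
    (hMv : mittagLeffler α (c • M) *ᵥ v = 0) :
    ∃ μ ∈ spectrum ℂ M, mittagLeffler α (c * μ) = 0 := by
  have hcomm : Commute (toLin' M) (toLin' (mittagLeffler α (c • M))) :=
    (((Commute.refl M).smul_right c).mittagLeffler_right α).map Matrix.toLinAlgEquiv'
  have hker : LinearMap.ker (toLin' (mittagLeffler α (c • M))) ≠ ⊥ :=
    Submodule.ne_bot_iff _ |>.2 ⟨v, by simpa using hMv, hv⟩
  obtain ⟨μ, w, hw, hMw⟩ := Module.End.exists_hasEigenvector_mem_ker_of_commute hcomm hker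
  refine ⟨μ, spectrum_toLin' M ▸ (Module.End.hasEigenvalue_of_hasEigenvector hw).mem_spectrum, ?_⟩
  have hcw : (c • M) *ᵥ w = (c * μ) • w := by
    rw [smul_mulVec, ← toLin'_apply, hw.apply_eq_smul, smul_smul]
  have h0 : mittagLeffler α (c * μ) • w = 0 := by
    rw [← mittagLeffler_mulVec_of_mulVec_eq_smul hα hcw, ← toLin'_apply, hMw]
  exact (smul_eq_zero.1 h0).resolve_right (Module.End.hasEigenvector_iff.1 hw).2

lemma Matrix.map_ofReal_mlMatR {n : Type*} [Fintype n] [DecidableEq n] {α : ℝ} (hα : 0 < α)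
    (B : Matrix n n ℝ) : (mlMatR α B).map Complex.ofReal = mittagLeffler α (B.map Complex.ofReal) :=
  Complex.ofRealAm.mapMatrix.map_mittagLeffler hα
    (continuous_id.matrix_map Complex.continuous_ofReal) B

end

theorem EIST_necessary_condition_general {n : Type*} [Fintype n] [DecidableEq n]
    (α : ℝ) (hα0 : 0 < α) (A : Matrix n n ℝ)
    (x₀ y₀ : n → ℝ) (hxy : x₀ ≠ y₀) (T : ℝ)
    (hint : (mlMatR α ((T ^ α) • A)).mulVec x₀ = (mlMatR α ((T ^ α) • A)).mulVec y₀) :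
    ∃ lam ∈ spectrum ℂ (A.map Complex.ofReal),
      mlE α (((T ^ α : ℝ) : ℂ) * lam) = 0 := by
  have hv : (mlMatR α (T ^ α • A)) *ᵥ (x₀ - y₀) = 0 := by
    rw [Matrix.mulVec_sub, hint, sub_self]
  have hv0 : Complex.ofReal ∘ (x₀ - y₀) ≠ 0 := fun h =>
    hxy <| funext fun i => by simpa [sub_eq_zero] using congrFun h i
  have hmap : (T ^ α • A).map Complex.ofReal = ((T ^ α : ℝ) : ℂ) • A.map Complex.ofReal := by
    ext i j
    simp
  have hvC : mittagLeffler α (((T ^ α : ℝ) : ℂ) • A.map Complex.ofReal) *ᵥ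
      (Complex.ofReal ∘ (x₀ - y₀)) = 0 := by
    rw [← hmap, ← Matrix.map_ofReal_mlMatR hα0]
    ext i
    exact (Complex.ofRealHom.map_mulVec _ _ i).symm.trans (by simp [hv])
  obtain ⟨μ, hμ, hE⟩ := Matrix.exists_mem_spectrum_mittagLeffler_mul_eq_zero hα0 _ _ hv0 hvC
  exact ⟨μ, hμ, (mlE_eq_mittagLeffler α _).trans hE⟩

theorem EIST_necessary_condition {n : Type*} [Fintype n] [DecidableEq n] [Nonempty n]
    (α : ℝ) (hα0 : 0 < α) (hα1 : α < 1) (A : Matrix n n ℝ)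
    (x₀ y₀ : n → ℝ) (hxy : x₀ ≠ y₀) (T : ℝ) (hT : 0 < T)
    (hint : (mlMatR α ((T ^ α) • A)).mulVec x₀ = (mlMatR α ((T ^ α) • A)).mulVec y₀) :
    ∃ lam ∈ spectrum ℂ (A.map Complex.ofReal),
      mlE α (((T ^ α : ℝ) : ℂ) * lam) = 0 :=
  EIST_necessary_condition_general α hα0 A x₀ y₀ hxy T hint
end

section
/- Let n be a nonempty finite type, 0 < α < 1, T > 0, and A an n×n real matrix with complexification A_ℂ. Suppose ζ ∈ ℂ satisfies E_α(ζ) = 0 and ζ / T^α ∈ spectrum ℂ A_ℂ. Then: (i) there exists a nonzero z ∈ ℝ^n with E_α(T^α • A) · z = 0 (the kernel of E_α(T^α • A) is nontrivial); and (ii) for every z₀ ∈ ℝ^n with E_α(T^α • A) · z₀ = 0 and every p in the range of the map y ↦ E_α(T^α • A) · y, there exists x₀ ∈ ℝ^n such that E_α(T^α • A) · (x₀ + z₀) = p. -/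
open Matrix

namespace Matrix

variable {n : Type*} [Fintype n] [DecidableEq n]

theorem exists_mulVec_eq_smul_of_mem_spectrum {K : Type*} [Field K] {M : Matrix n n K} {μ : K}
    (h : μ ∈ spectrum K M) : ∃ v ≠ 0, M *ᵥ v = μ • v := by
  rw [← spectrum_toLin', ← Module.End.hasEigenvalue_iff_mem_spectrum] at h
  obtain ⟨v, hv⟩ := h.exists_hasEigenvector
  exact ⟨v, hv.2, hv.apply_eq_smul⟩

theorem pow_mulVec_eq_smul {R : Type*} [CommRing R] {M : Matrix n n R} {μ : R} {v : n → R}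
    (h : M *ᵥ v = μ • v) (k : ℕ) : M ^ k *ᵥ v = μ ^ k • v := by
  induction k with
  | zero => simp
  | succ k ih => rw [pow_succ, ← mulVec_mulVec, h, mulVec_smul, ih, smul_smul, pow_succ']

theorem exists_hasSum_and_mulVec_eq_smul_of_hasSum_smul_pow {𝕜 : Type*} [Field 𝕜]
    [TopologicalSpace 𝕜] [IsTopologicalRing 𝕜] [T2Space 𝕜] {a : ℕ → 𝕜} {M S : Matrix n n 𝕜}
    (hS : HasSum (fun k => a k • M ^ k) S) {μ : 𝕜} {v : n → 𝕜} (hv : v ≠ 0)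
    (hMv : M *ᵥ v = μ • v) : ∃ s, HasSum (fun k => a k * μ ^ k) s ∧ S *ᵥ v = s • v := by
  have hSv : HasSum (fun k => (a k * μ ^ k) • v) (S *ᵥ v) := by
    simpa [Function.comp_def, mulVec.addMonoidHomLeft, smul_mulVec, pow_mulVec_eq_smul hMv,
      smul_smul] using
      hS.map (mulVec.addMonoidHomLeft v) (continuous_id.matrix_mulVec continuous_const)
  obtain ⟨i, hi⟩ := Function.ne_iff.mp hv
  have hs : HasSum (fun k => a k * μ ^ k) ((S *ᵥ v) i / v i) := by
    rw [← hasSum_mul_right_iff hi, div_mul_cancel₀ _ hi]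
    simpa [mul_comm] using Pi.hasSum.mp hSv i
  exact ⟨_, hs, hSv.unique (hs.smul_const v)⟩

theorem exists_mulVec_eq_zero_of_map {R S : Type*} [CommRing R] [IsDomain R] [CommRing S]
    [IsDomain S] {f : R →+* S} (hf : Function.Injective f) {M : Matrix n n R} {v : n → S}
    (hv : v ≠ 0) (hMv : M.map f *ᵥ v = 0) : ∃ w ≠ 0, M *ᵥ w = 0 := by
  refine exists_mulVec_eq_zero_iff.mpr (hf ?_)
  rw [f.map_det, map_zero]
  exact exists_mulVec_eq_zero_iff.mp ⟨v, hv, hMv⟩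

end Matrix

theorem mlMatR_map_ofReal_mulVec_eq_smul {n : Type*} [Fintype n] [DecidableEq n] (α : ℝ)
    {B : Matrix n n ℝ} {ζ : ℂ} {v : n → ℂ} (hv : v ≠ 0)
    (hBv : B.map Complex.ofReal *ᵥ v = ζ • v)
    (hS : Summable fun k : ℕ => (Real.Gamma (α * k + 1))⁻¹ • B ^ k) :
    (mlMatR α B).map Complex.ofReal *ᵥ v = mlE α ζ • v := by
  have hSℂ : HasSum (fun k : ℕ => ((Real.Gamma (α * k + 1) : ℂ))⁻¹ • B.map Complex.ofReal ^ k)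
      ((mlMatR α B).map Complex.ofReal) := by
    have hterm (k : ℕ) : ((Real.Gamma (α * k + 1))⁻¹ • B ^ k).map Complex.ofReal =
        ((Real.Gamma (α * k + 1) : ℂ))⁻¹ • B.map Complex.ofReal ^ k := by
      rw [Matrix.map_smulₛₗ _ Complex.ofReal _ (fun a => Complex.ofReal_mul _ a),
        Complex.ofReal_inv]
      exact congrArg _ (Matrix.map_pow B Complex.ofRealHom k)
    convert hS.hasSum.map Complex.ofRealHom.mapMatrix
      (continuous_id.matrix_map Complex.continuous_ofReal) using 1
    exacts [(funext hterm).symm, rfl]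
  obtain ⟨s, hs, hSv⟩ := exists_hasSum_and_mulVec_eq_smul_of_hasSum_smul_pow hSℂ hv hBv
  rw [hSv, mlE, hs.tsum_eq]

theorem mlMatR_map_ofReal_mulVec_eq_zero {n : Type*} [Fintype n] [DecidableEq n] {α : ℝ}
    {B : Matrix n n ℝ} {ζ : ℂ} (hζ : mlE α ζ = 0) {v : n → ℂ} (hv : v ≠ 0)
    (hBv : B.map Complex.ofReal *ᵥ v = ζ • v) :
    (mlMatR α B).map Complex.ofReal *ᵥ v = 0 := by
  by_cases hS : Summable fun k : ℕ => (Real.Gamma (α * k + 1))⁻¹ • B ^ k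
  · rw [mlMatR_map_ofReal_mulVec_eq_smul α hv hBv hS, hζ, zero_smul]
  · rw [mlMatR, tsum_eq_zero_of_not_summable hS, Matrix.map_zero _ Complex.ofReal_zero,
      zero_mulVec]

theorem typeII_collapse_general {n : Type*} [Fintype n] [DecidableEq n]
    (α : ℝ) (T : ℝ) (hT : 0 < T)
    (A : Matrix n n ℝ) (ζ : ℂ) (hζ : mlE α ζ = 0)
    (hspec : ζ / ((T ^ α : ℝ) : ℂ) ∈ spectrum ℂ (A.map Complex.ofReal)) :
    (∃ z : n → ℝ, z ≠ 0 ∧ (mlMatR α ((T ^ α) • A)).mulVec z = 0) ∧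
      ∀ z₀ : n → ℝ, (mlMatR α ((T ^ α) • A)).mulVec z₀ = 0 →
        ∀ p ∈ Set.range (fun y : n → ℝ => (mlMatR α ((T ^ α) • A)).mulVec y),
          ∃ x₀ : n → ℝ, (mlMatR α ((T ^ α) • A)).mulVec (x₀ + z₀) = p := by
  have hTα : ((T ^ α : ℝ) : ℂ) ≠ 0 := Complex.ofReal_ne_zero.mpr (Real.rpow_pos_of_pos hT α).ne'
  have hspecB : ζ ∈ spectrum ℂ (((T ^ α) • A).map Complex.ofReal) := by
    have := spectrum.smul_mem_smul_iff (r := Units.mk0 _ hTα) |>.mpr hspec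
    rwa [Units.smul_mk0, Units.smul_def, Units.val_mk0, smul_eq_mul, mul_div_cancel₀ _ hTα,
      ← Matrix.map_smulₛₗ _ Complex.ofReal _ (fun a => Complex.ofReal_mul _ a)] at this
  obtain ⟨v, hv, hBv⟩ := exists_mulVec_eq_smul_of_mem_spectrum hspecB
  have hker : (mlMatR α ((T ^ α) • A)).map Complex.ofRealHom *ᵥ v = 0 :=
    mlMatR_map_ofReal_mulVec_eq_zero hζ hv hBv
  refine ⟨exists_mulVec_eq_zero_of_map Complex.ofReal_injective hv hker, ?_⟩
  rintro z₀ - p ⟨y, rfl⟩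
  exact ⟨y - z₀, by rw [sub_add_cancel]⟩

theorem typeII_collapse {n : Type*} [Fintype n] [DecidableEq n] [Nonempty n]
    (α : ℝ) (hα0 : 0 < α) (hα1 : α < 1) (T : ℝ) (hT : 0 < T)
    (A : Matrix n n ℝ) (ζ : ℂ) (hζ : mlE α ζ = 0)
    (hspec : ζ / ((T ^ α : ℝ) : ℂ) ∈ spectrum ℂ (A.map Complex.ofReal)) :
    (∃ z : n → ℝ, z ≠ 0 ∧ (mlMatR α ((T ^ α) • A)).mulVec z = 0) ∧
      ∀ z₀ : n → ℝ, (mlMatR α ((T ^ α) • A)).mulVec z₀ = 0 →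
        ∀ p ∈ Set.range (fun y : n → ℝ => (mlMatR α ((T ^ α) • A)).mulVec y),
          ∃ x₀ : n → ℝ, (mlMatR α ((T ^ α) • A)).mulVec (x₀ + z₀) = p :=
  typeII_collapse_general α T hT A ζ hζ hspec
end

section
/- Let n be a nonempty finite type, 0 < α < 1, T > 0, T̃ > 0, and A an n×n real matrix. Let x₀ ∈ ℝ^n and q = E_α(T̃^α • A) · x₀, and suppose E_α(T̃^α • A) is invertible. Then the solution set H_{q,T} = {y ∈ ℝ^n | E_α(T^α • A) · y = q} equals the image of H_{x₀,T} = {y ∈ ℝ^n | E_α(T^α • A) · y = x₀} under the map y ↦ E_α(T̃^α • A) · y. -/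
theorem Commute.setOf_smul_eq_smul_eq_image {M X : Type*} [Monoid M] [MulAction M X]
    {a b : M} (hab : Commute a b) (hb : IsUnit b) (x : X) :
    {y : X | a • y = b • x} = (b • ·) '' {y : X | a • y = x} := by
  obtain ⟨u, rfl⟩ := hb
  ext y
  constructor
  · intro hy
    refine ⟨(↑u⁻¹ : M) • y, ?_, by simp [smul_smul]⟩
    calc a • (↑u⁻¹ : M) • y = (↑u⁻¹ : M) • a • y := by
          rw [smul_smul, smul_smul, (hab.units_inv_right).eq]
      _ = x := by rw [hy, smul_smul, u.inv_mul, one_smul]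
  · rintro ⟨z, hz, rfl⟩
    change a • (u : M) • z = (u : M) • x
    rw [smul_smul, hab.eq, mul_smul, hz]

theorem Commute.mlMatR (α : ℝ) {n : Type*} [Fintype n] [DecidableEq n]
    {A B : Matrix n n ℝ} (h : Commute A B) : Commute (mlMatR α A) (mlMatR α B) :=
  Commute.tsum_left _ fun k => Commute.tsum_right _ fun j =>
    ((h.pow_pow k j).smul_left _).smul_right _

theorem solution_set_evolution_general {n : Type*} [Fintype n] [DecidableEq n]
    (α : ℝ) (T T' : ℝ)
    (A : Matrix n n ℝ) (x₀ : n → ℝ)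
    (hinv : IsUnit (mlMatR α ((T' ^ α) • A))) :
    {y : n → ℝ | (mlMatR α ((T ^ α) • A)).mulVec y =
        (mlMatR α ((T' ^ α) • A)).mulVec x₀} =
      (fun y : n → ℝ => (mlMatR α ((T' ^ α) • A)).mulVec y) ''
        {y : n → ℝ | (mlMatR α ((T ^ α) • A)).mulVec y = x₀} :=
  (((Commute.refl A).smul_left _).smul_right _ |>.mlMatR α).setOf_smul_eq_smul_eq_image hinv x₀

theorem solution_set_evolution {n : Type*} [Fintype n] [DecidableEq n] [Nonempty n]
    (α : ℝ) (hα0 : 0 < α) (hα1 : α < 1) (T T' : ℝ) (hT : 0 < T) (hT' : 0 < T')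
    (A : Matrix n n ℝ) (x₀ : n → ℝ)
    (hinv : IsUnit (mlMatR α ((T' ^ α) • A))) :
    {y : n → ℝ | (mlMatR α ((T ^ α) • A)).mulVec y =
        (mlMatR α ((T' ^ α) • A)).mulVec x₀} =
      (fun y : n → ℝ => (mlMatR α ((T' ^ α) • A)).mulVec y) ''
        {y : n → ℝ | (mlMatR α ((T ^ α) • A)).mulVec y = x₀} :=
  solution_set_evolution_general α T T' A x₀ hinv
end

section
/- Let n be a nonempty finite type, 0 < α < 1, A an n×n real matrix, and x₀ ∈ ℝ^n. If x : ℝ → ℝ^n is continuous on [0, ∞) and satisfies for every t ≥ 0 the Volterra integral equation x(t) = x₀ + (Γ(α))⁻¹ • ∫_0^t (t−s)^{α−1} • (A · x(s)) ds, then x(t) = E_α(t^α • A) · x₀ for all t ≥ 0; i.e., the solution of the fractional initial value problem is unique. -/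
open Real MeasureTheory Set Filter Topology Matrix

theorem Real.rpow_mul_exp_neg_le_Gamma_add_one {x c : ℝ} (hx : 0 ≤ x) (hc : 0 ≤ c) :
    c ^ x * exp (-c) ≤ Gamma (x + 1) := by
  have hint : IntegrableOn (fun t ↦ exp (-t) * t ^ x) (Ioi 0) := by
    simpa using GammaIntegral_convergent (s := x + 1) (by linarith)
  rw [Gamma_eq_integral (by linarith), add_sub_cancel_right]
  calc c ^ x * exp (-c) = ∫ t in Ioi c, c ^ x * exp (-t) := by
        rw [integral_const_mul, integral_exp_neg_Ioi]
    _ ≤ ∫ t in Ioi c, exp (-t) * t ^ x :=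
        setIntegral_mono_on ((integrableOn_exp_neg_Ioi c).const_mul _)
          (hint.mono_set (Ioi_subset_Ioi hc)) measurableSet_Ioi fun t ht ↦ by
            rw [mul_comm]; gcongr; exact (mem_Ioi.1 ht).le
    _ ≤ ∫ t in Ioi 0, exp (-t) * t ^ x :=
        setIntegral_mono_set hint
          (ae_restrict_of_forall_mem measurableSet_Ioi fun t (ht : 0 < t) ↦ by positivity)
          (Ioi_subset_Ioi hc).eventuallyLE

theorem summable_pow_div_Gamma_mul_add_one {α : ℝ} (hα : 0 < α) (r : ℝ) :
    Summable fun k : ℕ ↦ r ^ k / Gamma (α * k + 1) := by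
  set q := 2 * |r| + 1
  -- `c ^ α = q` makes the bound `Γ(αk + 1) ≥ c ^ (αk) e^(-c)` geometric
  set c := q ^ α⁻¹
  have hq : 0 < q := by positivity
  have hratio : |r| / q < 1 := (div_lt_one hq).2 (by linarith [abs_nonneg r])
  refine .of_norm_bounded ((summable_geometric_of_lt_one (by positivity) hratio).mul_left
    (exp c)) fun k ↦ ?_
  have hΓ : q ^ k * exp (-c) ≤ Gamma (α * k + 1) := by
    have := rpow_mul_exp_neg_le_Gamma_add_one (x := α * k) (by positivity) (rpow_nonneg hq.le α⁻¹)
    rwa [rpow_mul (rpow_nonneg hq.le _), rpow_inv_rpow hq.le hα.ne', rpow_natCast] at this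
  have hpos : 0 < Gamma (α * k + 1) := Gamma_pos_of_pos (by positivity)
  rw [norm_div, norm_pow, Real.norm_eq_abs, Real.norm_eq_abs, abs_of_pos hpos, div_le_iff₀ hpos]
  calc |r| ^ k = exp c * (|r| / q) ^ k * (q ^ k * exp (-c)) := by
        rw [div_pow, exp_neg]; field_simp
    _ ≤ exp c * (|r| / q) ^ k * Gamma (α * k + 1) := by gcongr

noncomputable section RiemannLiouville

variable {E : Type*} [NormedAddCommGroup E] [NormedSpace ℝ E] {α β t : ℝ}

def riemannLiouville (α : ℝ) (f : ℝ → E) (t : ℝ) : E :=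
  (Gamma α)⁻¹ • ∫ s in (0 : ℝ)..t, (t - s) ^ (α - 1) • f s

theorem intervalIntegrable_sub_rpow_smul (hα : 0 < α) {f : ℝ → E} (ht : 0 ≤ t)
    (hf : ContinuousOn f (Icc 0 t)) :
    IntervalIntegrable (fun s ↦ (t - s) ^ (α - 1) • f s) volume 0 t := by
  have hker : IntervalIntegrable (fun s ↦ (t - s) ^ (α - 1)) volume 0 t := by
    simpa using ((intervalIntegral.intervalIntegrable_rpow' (a := 0) (b := t)
      (by linarith : (-1 : ℝ) < α - 1)).comp_sub_left t).symm
  exact hker.smul_continuousOn (by rwa [uIcc_of_le ht])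

theorem integral_sub_rpow_mul_rpow (hα : 0 < α) (hβ : -1 < β) (ht : 0 < t) :
    ∫ s in (0 : ℝ)..t, (t - s) ^ (α - 1) * s ^ β =
      Gamma α * Gamma (β + 1) / Gamma (α + β + 1) * t ^ (α + β) := by
  apply Complex.ofReal_injective
  have key := Complex.betaIntegral_scaled (β + 1) α ht
  rw [Complex.betaIntegral_eq_Gamma_mul_div _ _
    (by simp only [Complex.add_re, Complex.ofReal_re, Complex.one_re]; linarith)
    (by simpa using hα)] at key
  rw [show (β : ℂ) + 1 = (β + 1 : ℝ) by push_cast; ring,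
    show ((β + 1 : ℝ) : ℂ) + α - 1 = (α + β : ℝ) by push_cast; ring,
    show ((β + 1 : ℝ) : ℂ) + α = (α + β + 1 : ℝ) by push_cast; ring,
    ← Complex.ofReal_cpow ht.le] at key
  simp only [Complex.Gamma_ofReal] at key
  rw [← intervalIntegral.integral_ofReal]
  push_cast
  convert key using 1
  · refine intervalIntegral.integral_congr fun s hs ↦ ?_
    rw [uIcc_of_le ht.le] at hs
    rw [Complex.ofReal_cpow hs.1, Complex.ofReal_cpow (sub_nonneg.2 hs.2), mul_comm]
    push_cast
    ring_nf
  · ring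

theorem riemannLiouville_const_mul_rpow (hα : 0 < α) (hβ : 0 ≤ β) (C : ℝ) (ht : 0 ≤ t) :
    riemannLiouville α (fun s ↦ C * s ^ β) t =
      C * Gamma (β + 1) / Gamma (α + β + 1) * t ^ (α + β) := by
  rcases ht.eq_or_lt with rfl | ht
  · simp [riemannLiouville, zero_rpow (by positivity : α + β ≠ 0)]
  simp only [riemannLiouville, smul_eq_mul, mul_left_comm _ C, intervalIntegral.integral_const_mul]
  rw [integral_sub_rpow_mul_rpow hα (by linarith) ht]
  field_simp [(Gamma_pos_of_pos hα).ne']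

theorem riemannLiouville_sub (hα : 0 < α) {f g : ℝ → E} (ht : 0 ≤ t)
    (hf : ContinuousOn f (Icc 0 t)) (hg : ContinuousOn g (Icc 0 t)) :
    riemannLiouville α (fun s ↦ f s - g s) t = riemannLiouville α f t - riemannLiouville α g t := by
  simp only [riemannLiouville, smul_sub]
  rw [intervalIntegral.integral_sub (intervalIntegrable_sub_rpow_smul hα ht hf)
    (intervalIntegrable_sub_rpow_smul hα ht hg), smul_sub]

theorem riemannLiouville_finset_sum (hα : 0 < α) {ι : Type*} (S : Finset ι) {f : ι → ℝ → E}
    (ht : 0 ≤ t) (hf : ∀ i ∈ S, ContinuousOn (f i) (Icc 0 t)) :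
    riemannLiouville α (fun s ↦ ∑ i ∈ S, f i s) t = ∑ i ∈ S, riemannLiouville α (f i) t := by
  simp only [riemannLiouville, Finset.smul_sum]
  rw [intervalIntegral.integral_finsetSum fun i hi ↦
    intervalIntegrable_sub_rpow_smul hα ht (hf i hi), Finset.smul_sum]

theorem riemannLiouville_smul_const [CompleteSpace E] (c : ℝ → ℝ) (v : E) :
    riemannLiouville α (fun s ↦ c s • v) t = riemannLiouville α c t • v := by
  simp only [riemannLiouville, smul_smul, smul_eq_mul]
  rw [intervalIntegral.integral_smul_const, smul_smul]

theorem norm_riemannLiouville_le (hα : 0 < α) (hβ : 0 ≤ β) (ht : 0 ≤ t) {f : ℝ → E} {C : ℝ}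
    (hf : ∀ s ∈ Icc 0 t, ‖f s‖ ≤ C * s ^ β) :
    ‖riemannLiouville α f t‖ ≤ C * Gamma (β + 1) / Gamma (α + β + 1) * t ^ (α + β) := by
  have hΓ : 0 < Gamma α := Gamma_pos_of_pos hα
  rw [← riemannLiouville_const_mul_rpow hα hβ C ht, riemannLiouville, riemannLiouville,
    norm_smul, norm_inv, Real.norm_of_nonneg hΓ.le, smul_eq_mul]
  gcongr
  refine intervalIntegral.norm_integral_le_of_norm_le ht (ae_of_all _ fun s hs ↦ ?_)
    (intervalIntegrable_sub_rpow_smul hα ht ((continuous_rpow_const hβ).const_smul C).continuousOn)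
  have hts : 0 ≤ t - s := sub_nonneg.2 hs.2
  rw [norm_smul, Real.norm_of_nonneg (rpow_nonneg hts _), smul_eq_mul]
  gcongr
  exact hf s (Ioc_subset_Icc_self hs)

end RiemannLiouville

noncomputable section MittagLeffler

attribute [local instance] Matrix.linftyOpNormedAddCommGroup Matrix.linftyOpNormedSpace
  Matrix.linftyOpNormedRing

variable {n : Type*} [Fintype n] [DecidableEq n] {α : ℝ}

theorem summable_Gamma_inv_smul_pow (hα : 0 < α) (B : Matrix n n ℝ) :
    Summable fun k : ℕ ↦ (Gamma (α * k + 1))⁻¹ • B ^ k := by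
  refine (summable_pow_div_Gamma_mul_add_one hα ‖B‖).of_norm_bounded_eventually_nat ?_
  filter_upwards [eventually_ne_atTop 0] with k hk
  rw [norm_smul, norm_inv, Real.norm_of_nonneg (Gamma_pos_of_pos (by positivity)).le,
    inv_mul_eq_div]
  gcongr
  exact norm_pow_le' B (Nat.pos_of_ne_zero hk)

theorem hasSum_mlMatR_mulVec (hα : 0 < α) (B : Matrix n n ℝ) (v : n → ℝ) :
    HasSum (fun k : ℕ ↦ (Gamma (α * k + 1))⁻¹ • (B ^ k *ᵥ v)) (mlMatR α B *ᵥ v) := by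
  simpa [mlMatR, mulVec.addMonoidHomLeft, Function.comp_def, smul_mulVec] using
    (summable_Gamma_inv_smul_pow hα B).hasSum.map (mulVec.addMonoidHomLeft v)
      (continuous_id.matrix_mulVec continuous_const)

def mlPartialSum (α : ℝ) (A : Matrix n n ℝ) (x₀ : n → ℝ) (N : ℕ) (t : ℝ) : n → ℝ :=
  ∑ k ∈ Finset.range N, (t ^ (α * k) / Gamma (α * k + 1)) • (A ^ k *ᵥ x₀)

theorem tendsto_mlPartialSum (hα : 0 < α) (A : Matrix n n ℝ) (x₀ : n → ℝ) {t : ℝ} (ht : 0 ≤ t) :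
    Tendsto (fun N ↦ mlPartialSum α A x₀ N t) atTop (𝓝 (mlMatR α (t ^ α • A) *ᵥ x₀)) := by
  convert (hasSum_mlMatR_mulVec hα (t ^ α • A) x₀).tendsto_sum_nat using 2 with N
  refine Finset.sum_congr rfl fun k _ ↦ ?_
  rw [smul_pow, smul_mulVec, smul_smul, ← rpow_natCast, ← rpow_mul ht, div_eq_inv_mul]

theorem continuous_mlPartialSum (hα : 0 ≤ α) (A : Matrix n n ℝ) (x₀ : n → ℝ) (N : ℕ) :
    Continuous (mlPartialSum α A x₀ N) := by
  unfold mlPartialSum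
  fun_prop (disch := positivity)

theorem mlPartialSum_succ (hα : 0 < α) (A : Matrix n n ℝ) (x₀ : n → ℝ) (N : ℕ) {t : ℝ}
    (ht : 0 ≤ t) :
    mlPartialSum α A x₀ (N + 1) t =
      x₀ + riemannLiouville α (fun s ↦ A *ᵥ mlPartialSum α A x₀ N s) t := by
  have hterm (k : ℕ) : riemannLiouville α (fun s ↦ s ^ (α * k) / Gamma (α * k + 1)) t =
      t ^ (α * (k + 1 : ℕ)) / Gamma (α * (k + 1 : ℕ) + 1) := by
    simp_rw [div_eq_inv_mul]
    rw [riemannLiouville_const_mul_rpow hα (by positivity) _ ht]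
    push_cast
    rw [show α + α * k = α * (k + 1) by ring]
    field_simp
  simp only [mlPartialSum, mulVec_sum, mulVec_smul, mulVec_mulVec, ← pow_succ']
  rw [riemannLiouville_finset_sum hα _ ht fun k _ ↦ by fun_prop (disch := positivity)]
  simp only [riemannLiouville_smul_const, hterm, Finset.sum_range_succ', add_comm x₀]
  simp [Gamma_one]

theorem norm_sub_mlPartialSum_le (hα : 0 < α) {A : Matrix n n ℝ} {x₀ : n → ℝ} {x : ℝ → n → ℝ}
    (hcont : ContinuousOn x (Ici 0))
    (hvolterra : ∀ t, 0 ≤ t → x t = x₀ + riemannLiouville α (fun s ↦ A *ᵥ x s) t)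
    {T M : ℝ} (hM : ∀ t ∈ Icc 0 T, ‖x t‖ ≤ M) (N : ℕ) :
    ∀ t ∈ Icc 0 T,
      ‖x t - mlPartialSum α A x₀ N t‖ ≤ M * ‖A‖ ^ N * t ^ (α * N) / Gamma (α * N + 1) := by
  induction N with
  | zero => simpa [mlPartialSum, Gamma_one] using hM
  | succ N ih =>
    intro t ht
    have hsub : Icc 0 t ⊆ Ici 0 := Icc_subset_Ici_self
    have hrec : x t - mlPartialSum α A x₀ (N + 1) t =
        riemannLiouville α (fun s ↦ A *ᵥ (x s - mlPartialSum α A x₀ N s)) t := by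
      simp only [mulVec_sub]
      rw [hvolterra t ht.1, mlPartialSum_succ hα A x₀ N ht.1, add_sub_add_left_eq_sub,
        riemannLiouville_sub hα ht.1
          ((continuous_const.matrix_mulVec continuous_id).comp_continuousOn (hcont.mono hsub))
          (continuous_const.matrix_mulVec (continuous_mlPartialSum hα.le A x₀ N)).continuousOn]
    rw [hrec]
    refine (norm_riemannLiouville_le hα (by positivity) ht.1
      (β := α * N) (C := ‖A‖ * (M * ‖A‖ ^ N / Gamma (α * N + 1))) fun s hs ↦ ?_).trans_eq ?_
    · calc ‖A *ᵥ (x s - mlPartialSum α A x₀ N s)‖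
          ≤ ‖A‖ * ‖x s - mlPartialSum α A x₀ N s‖ := linfty_opNorm_mulVec _ _
        _ ≤ ‖A‖ * (M * ‖A‖ ^ N * s ^ (α * N) / Gamma (α * N + 1)) :=
          by gcongr; exact ih s ⟨hs.1, hs.2.trans ht.2⟩
        _ = ‖A‖ * (M * ‖A‖ ^ N / Gamma (α * N + 1)) * s ^ (α * N) := by ring
    · push_cast
      rw [show α + α * N = α * (N + 1) by ring]
      field_simp
      ring

theorem tendsto_mlPartialSum_of_volterra (hα : 0 < α) {A : Matrix n n ℝ} {x₀ : n → ℝ}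
    {x : ℝ → n → ℝ} (hcont : ContinuousOn x (Ici 0))
    (hvolterra : ∀ t, 0 ≤ t → x t = x₀ + riemannLiouville α (fun s ↦ A *ᵥ x s) t)
    {t : ℝ} (ht : 0 ≤ t) :
    Tendsto (fun N ↦ mlPartialSum α A x₀ N t) atTop (𝓝 (x t)) := by
  obtain ⟨M, hM⟩ := (isCompact_Icc (a := 0) (b := t)).exists_bound_of_continuousOn
    (hcont.mono Icc_subset_Ici_self)
  have hlim : Tendsto (fun N : ℕ ↦ M * ((‖A‖ * t ^ α) ^ N / Gamma (α * N + 1))) atTop (𝓝 0) := by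
    simpa using ((summable_pow_div_Gamma_mul_add_one hα _).tendsto_atTop_zero).const_mul M
  refine tendsto_iff_norm_sub_tendsto_zero.2 <|
    squeeze_zero (fun _ ↦ norm_nonneg _) (fun N ↦ ?_) hlim
  rw [norm_sub_rev, mul_pow, ← rpow_natCast (t ^ α), ← rpow_mul ht]
  exact (norm_sub_mlPartialSum_le hα hcont hvolterra hM N t ⟨ht, le_rfl⟩).trans_eq (by ring)

end MittagLeffler

theorem volterra_solution_unique_general {n : Type*} [Fintype n] [DecidableEq n]
    (α : ℝ) (hα0 : 0 < α) (A : Matrix n n ℝ) (x₀ : n → ℝ)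
    (x : ℝ → (n → ℝ)) (hcont : ContinuousOn x (Set.Ici (0:ℝ)))
    (hvolterra : ∀ t : ℝ, 0 ≤ t →
      x t = x₀ + (Real.Gamma α)⁻¹ •
        ∫ s in (0:ℝ)..t, ((t - s) ^ (α - 1)) • (A.mulVec (x s))) :
    ∀ t : ℝ, 0 ≤ t → x t = (mlMatR α ((t ^ α) • A)).mulVec x₀ := fun _ ht ↦
  tendsto_nhds_unique (tendsto_mlPartialSum_of_volterra hα0 hcont hvolterra ht)
    (tendsto_mlPartialSum hα0 A x₀ ht)

theorem volterra_solution_unique {n : Type*} [Fintype n] [DecidableEq n] [Nonempty n]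
    (α : ℝ) (hα0 : 0 < α) (hα1 : α < 1) (A : Matrix n n ℝ) (x₀ : n → ℝ)
    (x : ℝ → (n → ℝ)) (hcont : ContinuousOn x (Set.Ici (0:ℝ)))
    (hvolterra : ∀ t : ℝ, 0 ≤ t →
      x t = x₀ + (Real.Gamma α)⁻¹ •
        ∫ s in (0:ℝ)..t, ((t - s) ^ (α - 1)) • (A.mulVec (x s))) :
    ∀ t : ℝ, 0 ≤ t → x t = (mlMatR α ((t ^ α) • A)).mulVec x₀ :=
  volterra_solution_unique_general α hα0 A x₀ x hcont hvolterra
end
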